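/- There is a unique real number x* ≥ 2 satisfying x*^{3/2}·sin(π/x*) = π (numerically x* = 2.15409…), and, writing x_t for the unique solution x ≥ 2 of the equation (t+1)·sin(π/(t+1)) = x^{3/2}·sin(π/x) (so that x_t = f_t(0)), x_t tends to x* as the integer t tends to infinity. -/

import Mathlib

/-!
With `θ = π / x` we have `x ^ p * sin (π / x) = π · x ^ (p - 1) · sinc θ`. Since `sin` is strictly
concave on `[0, π]` and vanishes at `0`, `sinc` is strictly decreasing there, so for `p ≥ 1` this
function is strictly increasing on `[1, ∞)`. For `p = 3/2` it equals `2√2 < π` at `2` and `9/2 > π`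
at `3`, which gives `x*`. Finally `(t + 1) · sin (π / (t + 1)) = π · sinc (π / (t + 1)) → π`, and
a strictly increasing function can only approach its value at `x*` along a sequence tending to `x*`.
-/

open Real Filter Set Topology

theorem StrictMonoOn.tendsto_of_tendsto_comp_Ici {α β ι : Type*} [LinearOrder α]
    [TopologicalSpace α] [OrderTopology α] [LinearOrder β] [TopologicalSpace β] [OrderTopology β]
    {f : α → β} {a c : α} {l : Filter ι} {x : ι → α} (hf : StrictMonoOn f (Ici a)) (hc : a ≤ c)
    (hx : ∀ᶠ i in l, a ≤ x i) (hfx : Tendsto (f ∘ x) l (𝓝 (f c))) : Tendsto x l (𝓝 c) := by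
  rw [tendsto_order]
  constructor
  · intro b hb
    rcases lt_or_ge b a with hba | hab
    · filter_upwards [hx] with i hi using hba.trans_le hi
    · filter_upwards [hx, hfx.eventually (eventually_gt_nhds (hf hab hc hb))] with i hi hfi
      exact (hf.lt_iff_lt hab hi).1 hfi
  · intro b hb
    have hab : a ≤ b := hc.trans hb.le
    filter_upwards [hx, hfx.eventually (eventually_lt_nhds (hf hc hab hb))] with i hi hfi
    exact (hf.lt_iff_lt hi hab).1 hfi

namespace Real

theorem strictAntiOn_sinc : StrictAntiOn sinc (Icc 0 π) := by
  intro x hx y hy hxy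
  have hy0 : y ≠ 0 := (hx.1.trans_lt hxy).ne'
  rw [sinc_of_ne_zero hy0]
  rcases hx.1.eq_or_lt with rfl | hx0
  · rw [sinc_zero, div_lt_one hxy]
    exact sin_lt hxy
  · have h := strictConcaveOn_sin_Icc.secant_strict_mono (left_mem_Icc.2 pi_pos.le) hx hy
      hx0.ne' hy0 hxy
    simpa [sinc_of_ne_zero hx0.ne'] using h

theorem sinc_nonneg_of_mem_Icc {x : ℝ} (hx : x ∈ Icc 0 π) : 0 ≤ sinc x := by
  rcases hx.1.eq_or_lt with rfl | hx0
  · simp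
  · rw [sinc_of_ne_zero hx0.ne']
    exact div_nonneg (sin_nonneg_of_nonneg_of_le_pi hx.1 hx.2) hx.1

theorem mul_sin_div_eq_mul_sinc (c : ℝ) {x : ℝ} (hx : x ≠ 0) :
    x * sin (c / x) = c * sinc (c / x) := by
  rcases eq_or_ne c 0 with rfl | hc
  · simp
  · rw [sinc_of_ne_zero (div_ne_zero hc hx)]
    field_simp

theorem tendsto_mul_sin_div_atTop (c : ℝ) :
    Tendsto (fun x : ℝ => x * sin (c / x)) atTop (𝓝 c) := by
  have hsinc : Tendsto (fun x : ℝ => sinc (c / x)) atTop (𝓝 1) := by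
    simpa [Function.comp_def] using (continuous_sinc.tendsto 0).comp (tendsto_const_nhds.div_atTop tendsto_id)
  refine (by simpa using hsinc.const_mul c : Tendsto _ _ (𝓝 c)).congr' ?_
  filter_upwards [eventually_ne_atTop 0] with x hx
  exact (mul_sin_div_eq_mul_sinc c hx).symm

theorem rpow_mul_sin_pi_div_eq {p x : ℝ} (hx : 0 < x) :
    x ^ p * sin (π / x) = π * (x ^ (p - 1) * sinc (π / x)) := by
  rw [rpow_sub_one hx.ne', mul_left_comm, ← mul_sin_div_eq_mul_sinc π hx.ne']
  field_simp

theorem strictMonoOn_rpow_mul_sin_pi_div {p : ℝ} (hp : 1 ≤ p) :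
    StrictMonoOn (fun x : ℝ => x ^ p * sin (π / x)) (Ici 1) := by
  intro x (hx : 1 ≤ x) y (hy : 1 ≤ y) hxy
  have hx0 : 0 < x := one_pos.trans_le hx
  have hy0 : 0 < y := hx0.trans hxy
  have mem {z : ℝ} (hz : 1 ≤ z) : π / z ∈ Icc 0 π :=
    ⟨by positivity, div_le_self pi_pos.le hz⟩
  simp only [rpow_mul_sin_pi_div_eq hx0, rpow_mul_sin_pi_div_eq hy0]
  refine mul_lt_mul_of_pos_left (mul_lt_mul_of_le_of_lt_of_nonneg_of_pos ?_ ?_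
    (sinc_nonneg_of_mem_Icc (mem hx)) (rpow_pos_of_pos hy0 _)) pi_pos
  · exact rpow_le_rpow hx0.le hxy.le (sub_nonneg.2 hp)
  · exact strictAntiOn_sinc (mem hy) (mem hx) (div_lt_div_of_pos_left pi_pos hx0 hxy)

theorem continuousOn_rpow_mul_sin_pi_div (p : ℝ) :
    ContinuousOn (fun x : ℝ => x ^ p * sin (π / x)) (Ioi 0) := by
  fun_prop (disch := intro x hx; exact ne_of_gt hx)

theorem rpow_three_halves_eq_mul_sqrt {x : ℝ} (hx : 0 ≤ x) : x ^ (3 / 2 : ℝ) = x * √x := by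
  rw [sqrt_eq_rpow, show (3 / 2 : ℝ) = 1 + 1 / 2 by norm_num, rpow_add' hx (by norm_num), rpow_one]

end Real

/-- There is a unique `x* ≥ 2` with `x*^{3/2}·sin(π/x*) = π`, and the unique
solution `x_t ≥ 2` of `(t+1)·sin(π/(t+1)) = x^{3/2}·sin(π/x)` (that is, `f_t(0)`)
tends to `x*` as the integer `t` tends to infinity. -/
theorem ft_zero_tendsto :
    ∃ xstar : ℝ,
      (2 ≤ xstar ∧ xstar ^ ((3 : ℝ) / 2) * Real.sin (π / xstar) = π) ∧
      (∀ y : ℝ, 2 ≤ y → y ^ ((3 : ℝ) / 2) * Real.sin (π / y) = π → y = xstar) ∧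
      (∀ x : ℕ → ℝ,
        (∀ t : ℕ, 3 ≤ t → 2 ≤ x t ∧
          ((t : ℝ) + 1) * Real.sin (π / ((t : ℝ) + 1))
            = (x t) ^ ((3 : ℝ) / 2) * Real.sin (π / x t)) →
        Tendsto x atTop (nhds xstar)) := by
  set g : ℝ → ℝ := fun x => x ^ ((3 : ℝ) / 2) * sin (π / x)
  have hmono : StrictMonoOn g (Ici 2) :=
    (strictMonoOn_rpow_mul_sin_pi_div (by norm_num)).mono (Ici_subset_Ici.2 one_le_two)
  have hg2 : g 2 < π := by
    have : √2 < 3 / 2 := by nlinarith [sq_sqrt (zero_le_two : (0 : ℝ) ≤ 2), sqrt_nonneg 2]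
    simp only [g, rpow_three_halves_eq_mul_sqrt zero_le_two, sin_pi_div_two]
    linarith [pi_gt_three]
  have hg3 : π < g 3 := by
    have : √3 * √3 = 3 := mul_self_sqrt zero_le_three
    simp only [g, rpow_three_halves_eq_mul_sqrt zero_le_three, sin_pi_div_three]
    nlinarith [pi_lt_four]
  obtain ⟨xstar, ⟨h2, -⟩, hgx⟩ := intermediate_value_Icc (by norm_num : (2 : ℝ) ≤ 3)
    ((continuousOn_rpow_mul_sin_pi_div _).mono fun y hy => two_pos.trans_le hy.1) ⟨hg2.le, hg3.le⟩
  refine ⟨xstar, ⟨h2, hgx⟩, fun y hy hgy => hmono.injOn hy h2 (hgy.trans hgx.symm), ?_⟩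
  intro x hx
  refine hmono.tendsto_of_tendsto_comp_Ici h2
    (eventually_atTop.2 ⟨3, fun t ht => (hx t ht).1⟩) ?_
  rw [show g xstar = π from hgx]
  refine ((tendsto_mul_sin_div_atTop π).comp
    (tendsto_atTop_add_const_right _ 1 tendsto_natCast_atTop_atTop)).congr' ?_
  filter_upwards [eventually_ge_atTop 3] with t ht using (hx t ht).2
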